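/- arXiv:2508.04884 — 2 statements merged into one kernel-verified Lean document; each statement's English description precedes it below -/
import Mathlib

section
/- Let β : [0,1] → ℝ be continuous with β(s) > 0 for all s, set α_t = exp(−∫₀^t β(s) ds), let N ≥ 1 and T ≥ 1. Let Λ(t) = ∫₀^t √( N·(α'_s)²/(α_s·(1−α_s)) ) ds, let φ*(t) = Λ⁻¹(Λ(1)·t) be the geodesic schedule generator, and let t_i* = φ*(i/T) for 0 ≤ i ≤ T. Then the optimal schedule satisfies α_{t_i*} = cos²( (i/T)·(π/2 − arcsin(√α₁)) ) for every 0 ≤ i ≤ T. -/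
open Set MeasureTheory Real

/-!
Along a decreasing path `α` in `(0, 1)` the Fisher–Rao speed `√(N α'² / (α (1 - α)))` is the
derivative of `-2√N · arcsin √α`, so `Λ(t) = 2√N (π/2 - arcsin √α_t)`: the geodesic condition
`Λ(φ*(x)) = Λ(1) x` makes `π/2 - arcsin √α` linear along the schedule, and
`cos (π/2 - arcsin √y) ^ 2 = y` turns this back into a formula for `α`.
-/

theorem hasDerivAt_arcsin_sqrt {a : ℝ → ℝ} {a' x : ℝ} (ha : HasDerivAt a a' x)
    (h0 : 0 < a x) (h1 : a x < 1) :
    HasDerivAt (fun t => arcsin √(a t)) (a' / (2 * √(a x * (1 - a x)))) x := by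
  have hs : √(a x) ^ 2 = a x := sq_sqrt h0.le
  have hne₁ : √(a x) ≠ -1 := by linarith [sqrt_nonneg (a x)]
  have hne₂ : √(a x) ≠ 1 := fun h => by rw [h, one_pow] at hs; linarith
  refine ((hasDerivAt_arcsin hne₁ hne₂).comp x (ha.sqrt h0.ne')).congr_deriv ?_
  rw [hs, sqrt_mul h0.le]
  field_simp

theorem hasDerivAt_fisherRao_primitive {a : ℝ → ℝ} {a' x : ℝ} (κ : ℝ) (ha : HasDerivAt a a' x)
    (ha' : a' ≤ 0) (h0 : 0 < a x) (h1 : a x < 1) :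
    HasDerivAt (fun t => -2 * √κ * arcsin √(a t)) (√(κ * a' ^ 2 / (a x * (1 - a x)))) x := by
  refine ((hasDerivAt_arcsin_sqrt ha h0 h1).const_mul (-2 * √κ)).congr_deriv ?_
  have hpos : 0 < a x * (1 - a x) := mul_pos h0 (by linarith)
  rw [mul_div_assoc, sqrt_mul' κ (by positivity), sqrt_div' _ hpos.le, sqrt_sq_eq_abs,
    abs_of_nonpos ha']
  field_simp

noncomputable def fisherRaoLength (κ : ℝ) (a : ℝ → ℝ) (t : ℝ) : ℝ :=
  ∫ s in (0:ℝ)..t, √(κ * deriv a s ^ 2 / (a s * (1 - a s)))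

theorem fisherRaoLength_eq {a : ℝ → ℝ} {t : ℝ} (κ : ℝ) (ht : 0 ≤ t) (ha₀ : a 0 = 1)
    (hcont : ContinuousOn a (Icc 0 t)) (hdiff : ∀ x ∈ Ioo 0 t, DifferentiableAt ℝ a x)
    (hanti : ∀ x ∈ Ioo 0 t, deriv a x ≤ 0) (hmem : ∀ x ∈ Ioo 0 t, a x ∈ Ioo 0 1) :
    fisherRaoLength κ a t = 2 * √κ * (π / 2 - arcsin √(a t)) := by
  have hprim : ∀ x ∈ Ioo 0 t, HasDerivAt (fun t => -2 * √κ * arcsin √(a t))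
      (√(κ * deriv a x ^ 2 / (a x * (1 - a x)))) x := fun x hx =>
    hasDerivAt_fisherRao_primitive κ (hdiff x hx).hasDerivAt (hanti x hx) (hmem x hx).1
      (hmem x hx).2
  have hcont' : ContinuousOn (fun t => -2 * √κ * arcsin √(a t)) (Icc 0 t) :=
    continuousOn_const.mul (continuous_arcsin.comp_continuousOn hcont.sqrt)
  -- the speed blows up at `t = 0`, but as the nonnegative derivative of a continuous
  -- function it is integrable
  have hint : IntervalIntegrable (fun s => √(κ * deriv a s ^ 2 / (a s * (1 - a s)))) volume 0 t :=
    (intervalIntegrable_iff_integrableOn_Ioc_of_le ht).2 <|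
      intervalIntegral.integrableOn_deriv_of_nonneg hcont' hprim fun _ _ => sqrt_nonneg _
  rw [fisherRaoLength, intervalIntegral.integral_eq_sub_of_hasDerivAt_of_le ht hcont' hprim hint,
    ha₀, sqrt_one, arcsin_one]
  ring

noncomputable def noiseSchedule (β : ℝ → ℝ) (t : ℝ) : ℝ :=
  exp (-(∫ s in (0:ℝ)..t, β s))

section noiseSchedule

variable {β : ℝ → ℝ} {b : ℝ}

theorem noiseSchedule_zero (β : ℝ → ℝ) : noiseSchedule β 0 = 1 := by
  simp [noiseSchedule]

theorem continuousOn_noiseSchedule (hβ : ContinuousOn β (Icc 0 b)) (hb : 0 ≤ b) :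
    ContinuousOn (noiseSchedule β) (Icc 0 b) := by
  have h := intervalIntegral.continuousOn_primitive_interval (μ := volume) (a := 0) (b := b)
    (by rw [uIcc_of_le hb]; exact hβ.integrableOn_Icc)
  rw [uIcc_of_le hb] at h
  exact continuous_exp.comp_continuousOn h.neg

theorem hasDerivAt_noiseSchedule (hβ : ContinuousOn β (Icc 0 b)) {x : ℝ} (hx : x ∈ Ioo 0 b) :
    HasDerivAt (noiseSchedule β) (-β x * noiseSchedule β x) x := by
  have hnhds : Icc 0 b ∈ nhds x := Icc_mem_nhds hx.1 hx.2
  have hprim : HasDerivAt (fun t => ∫ s in (0:ℝ)..t, β s) (β x) x :=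
    intervalIntegral.integral_hasDerivAt_right
      ((hβ.mono (Icc_subset_Icc_right hx.2.le)).intervalIntegrable_of_Icc hx.1.le)
      ⟨Icc 0 b, hnhds, hβ.aestronglyMeasurable measurableSet_Icc⟩ (hβ.continuousAt hnhds)
  exact hprim.neg.exp.congr_deriv (by rw [noiseSchedule, Pi.neg_apply]; ring)

theorem noiseSchedule_pos (β : ℝ → ℝ) (t : ℝ) : 0 < noiseSchedule β t :=
  exp_pos _

theorem noiseSchedule_lt_one (hβ : ContinuousOn β (Icc 0 b)) (hβpos : ∀ s ∈ Icc 0 b, 0 < β s)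
    {t : ℝ} (ht : t ∈ Ioc 0 b) : noiseSchedule β t < 1 := by
  refine exp_lt_one_iff.2 (neg_neg_iff_pos.2 (intervalIntegral.intervalIntegral_pos_of_pos_on ?_
    (fun s hs => hβpos s ⟨hs.1.le, hs.2.le.trans ht.2⟩) ht.1))
  exact (hβ.mono (Icc_subset_Icc_right ht.2)).intervalIntegrable_of_Icc ht.1.le

theorem fisherRaoLength_noiseSchedule (hβ : ContinuousOn β (Icc 0 b))
    (hβpos : ∀ s ∈ Icc 0 b, 0 < β s) (κ : ℝ) {t : ℝ} (ht : t ∈ Icc 0 b) :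
    fisherRaoLength κ (noiseSchedule β) t =
      2 * √κ * (π / 2 - arcsin √(noiseSchedule β t)) := by
  have hβt : ContinuousOn β (Icc 0 t) := hβ.mono (Icc_subset_Icc_right ht.2)
  refine fisherRaoLength_eq κ ht.1 (noiseSchedule_zero β) (continuousOn_noiseSchedule hβt ht.1)
    (fun x hx => (hasDerivAt_noiseSchedule hβt hx).differentiableAt) (fun x hx => ?_)
    (fun x hx => ⟨noiseSchedule_pos β x, noiseSchedule_lt_one hβt ?_ ⟨hx.1, hx.2.le⟩⟩)
  · rw [(hasDerivAt_noiseSchedule hβt hx).deriv, neg_mul]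
    exact neg_nonpos.2 (mul_pos (hβpos x ⟨hx.1.le, hx.2.le.trans ht.2⟩)
      (noiseSchedule_pos β x)).le
  · exact fun s hs => hβpos s ⟨hs.1, hs.2.trans ht.2⟩

theorem noiseSchedule_le_one (hβ : ContinuousOn β (Icc 0 b)) (hβpos : ∀ s ∈ Icc 0 b, 0 < β s)
    {t : ℝ} (ht : t ∈ Icc 0 b) : noiseSchedule β t ≤ 1 := by
  rcases ht.1.eq_or_lt with rfl | h
  · exact (noiseSchedule_zero β).le
  · exact (noiseSchedule_lt_one hβ hβpos ⟨h, ht.2⟩).le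

end noiseSchedule

theorem cos_pi_div_two_sub_arcsin_sqrt_sq {y : ℝ} (h0 : 0 ≤ y) (h1 : y ≤ 1) :
    cos (π / 2 - arcsin √y) ^ 2 = y := by
  rw [cos_pi_div_two_sub, sin_arcsin (by linarith [sqrt_nonneg y]) (sqrt_le_one.2 h1), sq_sqrt h0]

theorem stmt11_general (β : ℝ → ℝ) (hβc : ContinuousOn β (Icc 0 1))
    (hβpos : ∀ s ∈ Icc (0:ℝ) 1, 0 < β s)
    (α : ℝ → ℝ) (hα : ∀ t, α t = Real.exp (-(∫ s in (0:ℝ)..t, β s)))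
    (N T : ℕ) (hN : 1 ≤ N)
    (L : ℝ → ℝ)
    (hL : ∀ t, L t =
      ∫ s in (0:ℝ)..t, Real.sqrt ((N : ℝ) * (deriv α s) ^ 2 / (α s * (1 - α s))))
    (φs : ℝ → ℝ) (hmap : ∀ t ∈ Icc (0:ℝ) 1, φs t ∈ Icc (0:ℝ) 1)
    (hgeo : ∀ t ∈ Icc (0:ℝ) 1, L (φs t) = L 1 * t) :
    ∀ i : ℕ, i ≤ T →
      α (φs ((i : ℝ) / T))
        = Real.cos (((i : ℝ) / T) * (π / 2 - Real.arcsin (Real.sqrt (α 1)))) ^ 2 := by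
  intro i hi
  obtain rfl : α = noiseSchedule β := funext hα
  have hx : (i : ℝ) / T ∈ Icc (0:ℝ) 1 :=
    ⟨by positivity, div_le_one_of_le₀ (by exact_mod_cast hi) T.cast_nonneg⟩
  have hLeq (t : ℝ) (ht : t ∈ Icc (0:ℝ) 1) :
      L t = 2 * √N * (π / 2 - arcsin √(noiseSchedule β t)) :=
    (hL t).trans (fisherRaoLength_noiseSchedule hβc hβpos N ht)
  have hscale : 0 < 2 * √(N : ℝ) := by positivity
  have harc : π / 2 - arcsin √(noiseSchedule β (φs (i / T))) =
      i / T * (π / 2 - arcsin √(noiseSchedule β 1)) := by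
    have h := hgeo _ hx
    rw [hLeq _ (hmap _ hx), hLeq 1 ⟨zero_le_one, le_rfl⟩] at h
    exact mul_left_cancel₀ hscale.ne' (by rw [h]; ring)
  rw [← harc, cos_pi_div_two_sub_arcsin_sqrt_sq (noiseSchedule_pos β _).le
    (noiseSchedule_le_one hβc hβpos (hmap _ hx))]

/-- For masked discrete diffusion with `N ≥ 1` tokens, noise
schedule `α_t = exp(−∫₀^t β(s) ds)` (`β` continuous positive on `[0,1]`), cumulative
Fisher–Rao length `Λ(t) = ∫₀^t √(N·(α'_s)²/(α_s(1−α_s))) ds`, geodesic schedule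
generator `φ*` (characterised by `Λ(φ*(t)) = Λ(1)·t`, mapping `[0,1]` to `[0,1]`),
and `t_i* = φ*(i/T)` for `0 ≤ i ≤ T`, the optimal schedule satisfies
`α_{t_i*} = cos²((i/T)·(π/2 − arcsin √(α₁)))`. -/
theorem stmt11 (β : ℝ → ℝ) (hβc : ContinuousOn β (Icc 0 1))
    (hβpos : ∀ s ∈ Icc (0:ℝ) 1, 0 < β s)
    (α : ℝ → ℝ) (hα : ∀ t, α t = Real.exp (-(∫ s in (0:ℝ)..t, β s)))
    (N T : ℕ) (hN : 1 ≤ N) (hT : 1 ≤ T)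
    (L : ℝ → ℝ)
    (hL : ∀ t, L t =
      ∫ s in (0:ℝ)..t, Real.sqrt ((N : ℝ) * (deriv α s) ^ 2 / (α s * (1 - α s))))
    (φs : ℝ → ℝ) (hmap : ∀ t ∈ Icc (0:ℝ) 1, φs t ∈ Icc (0:ℝ) 1)
    (hgeo : ∀ t ∈ Icc (0:ℝ) 1, L (φs t) = L 1 * t) :
    ∀ i : ℕ, i ≤ T →
      α (φs ((i : ℝ) / T))
        = Real.cos (((i : ℝ) / T) * (π / 2 - Real.arcsin (Real.sqrt (α 1)))) ^ 2 :=
  stmt11_general β hβc hβpos α hα N T hN L hL φs hmap hgeo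
end

section
/- Let N ≥ 1, let α_t = 1 − t (so α'_t = −1, α₀ = 1, α₁ = 0), and consider the Fisher–Rao metric δ(t) = N·(α'_t)²/(α_t·(1−α_t)) = N/(t·(1−t)) on (0,1). Then the cumulative length is Λ(s) = ∫₀^s √(N/(r(1−r))) dr = 2√N·arcsin(√s), the geodesic schedule generator is φ*(t) = Λ⁻¹(Λ(1)·t) = sin²(π·t/2), and the optimal schedule with T ≥ 1 steps satisfies α_{t_i*} = cos²( (i/T)·(π/2) ) for every 0 ≤ i ≤ T, where t_i* = φ*(i/T); i.e. the optimal schedule is the cosine schedule. -/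
/-!
With `α_t = 1 - t` the Fisher–Rao metric is `N / (t (1 - t))`, and
`s ↦ 2 √N · arcsin √s` is an antiderivative of its square root on `(0, 1)`, continuous on `[0, 1]`;
its derivative is nonnegative, hence integrable, so the fundamental theorem of calculus gives
`Λ(s) = 2 √N · arcsin √s` and `Λ(1) = π √N`. Then `Λ(sin² (π t / 2)) = 2 √N · π t / 2 = Λ(1) t`,
so `φ*(t) = sin² (π t / 2)`, and `α_{φ*(i/T)} = 1 - sin² = cos²`.
-/

open Set MeasureTheory Real

theorem hasDerivAt_arcsin_sqrt_s13 {x : ℝ} (hx0 : 0 < x) (hx1 : x < 1) :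
    HasDerivAt (fun s => arcsin (√s)) (2 * √(x * (1 - x)))⁻¹ x := by
  have hsqrt_lt_one : √x < 1 := (sqrt_lt' one_pos).2 (by simpa using hx1)
  have harcsin := hasDerivAt_arcsin (by linarith [sqrt_nonneg x]) hsqrt_lt_one.ne
  refine (harcsin.comp x (hasDerivAt_sqrt hx0.ne')).congr_deriv ?_
  have : 0 < √(1 - x) := sqrt_pos.mpr (by linarith)
  rw [sq_sqrt hx0.le, sqrt_mul hx0.le]
  field_simp

theorem integral_sqrt_div_mul_one_sub (c : ℝ) {s : ℝ} (hs : s ∈ Icc (0 : ℝ) 1) :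
    ∫ r in (0 : ℝ)..s, √(c / (r * (1 - r))) = 2 * √c * arcsin (√s) := by
  set F : ℝ → ℝ := fun s => 2 * √c * arcsin (√s)
  have hF_cont : ContinuousOn F (Icc 0 s) := by fun_prop
  have hF_deriv : ∀ x ∈ Ioo 0 s, HasDerivAt F (√(c / (x * (1 - x)))) x := by
    intro x ⟨hx0, hxs⟩
    have hx_mul : 0 ≤ x * (1 - x) := mul_nonneg hx0.le (by linarith [hs.2])
    refine ((hasDerivAt_arcsin_sqrt_s13 hx0 (by linarith [hs.2])).const_mul (2 * √c)).congr_deriv ?_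
    rw [sqrt_div' c hx_mul]
    field_simp
  have hF'_int : IntervalIntegrable (fun r => √(c / (r * (1 - r)))) volume 0 s := by
    refine intervalIntegral.intervalIntegrable_deriv_of_nonneg (g := F) ?_ ?_ ?_ <;>
      simp only [uIcc_of_le hs.1, min_eq_left hs.1, max_eq_right hs.1]
    exacts [hF_cont, hF_deriv, fun x _ => sqrt_nonneg _]
  rw [intervalIntegral.integral_eq_sub_of_hasDerivAt_of_le hs.1 hF_cont hF_deriv hF'_int]
  simp [F]

theorem arcsin_sqrt_sin_sq {x : ℝ} (hx : x ∈ Icc 0 (π / 2)) : arcsin (√(sin x ^ 2)) = x := by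
  rw [sqrt_sq (sin_nonneg_of_nonneg_of_le_pi hx.1 (by linarith [hx.2, pi_pos])),
    arcsin_sin (by linarith [hx.1, pi_pos]) hx.2]

theorem stmt13_general (N T : ℕ)
    (L : ℝ → ℝ)
    (hL : ∀ s, L s = ∫ r in (0:ℝ)..s, Real.sqrt ((N : ℝ) / (r * (1 - r)))) :
    (∀ t ∈ Ioo (0:ℝ) 1,
      (N : ℝ) * (deriv (fun u : ℝ => 1 - u) t) ^ 2 / ((1 - t) * (1 - (1 - t)))
        = (N : ℝ) / (t * (1 - t))) ∧
    (∀ s ∈ Icc (0:ℝ) 1, L s = 2 * Real.sqrt (N : ℝ) * Real.arcsin (Real.sqrt s)) ∧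
    (∀ t ∈ Icc (0:ℝ) 1,
      Real.sin (π * t / 2) ^ 2 ∈ Icc (0:ℝ) 1 ∧
      L (Real.sin (π * t / 2) ^ 2) = L 1 * t) ∧
    (∀ i : ℕ, i ≤ T →
      1 - Real.sin (π * ((i : ℝ) / T) / 2) ^ 2
        = Real.cos (((i : ℝ) / T) * (π / 2)) ^ 2) := by
  have hL_eq : ∀ s ∈ Icc (0:ℝ) 1, L s = 2 * √(N : ℝ) * arcsin (√s) := fun s hs => by
    rw [hL, integral_sqrt_div_mul_one_sub _ hs]
  have hL_one : L 1 = √(N : ℝ) * π := by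
    rw [hL_eq 1 (by simp), sqrt_one, arcsin_one]
    ring
  refine ⟨fun t _ => ?_, hL_eq, fun t ht => ?_, fun i _ => ?_⟩
  · rw [deriv_const_sub, deriv_id'']
    ring
  · have hsin_sq_mem : sin (π * t / 2) ^ 2 ∈ Icc (0:ℝ) 1 := ⟨sq_nonneg _, sin_sq_le_one _⟩
    have hangle : π * t / 2 ∈ Icc 0 (π / 2) :=
      ⟨by nlinarith [pi_pos, ht.1], by nlinarith [pi_pos, ht.2]⟩
    refine ⟨hsin_sq_mem, ?_⟩
    rw [hL_eq _ hsin_sq_mem, arcsin_sqrt_sin_sq hangle, hL_one]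
    ring
  · rw [← cos_sq']
    ring_nf

/-- For masked discrete diffusion with `N ≥ 1` tokens and the linear
noise schedule `α_t = 1 − t` (so `α'_t = −1`, `α₀ = 1`, `α₁ = 0`), the Fisher–Rao
metric is `δ(t) = N·(α'_t)²/(α_t(1−α_t)) = N/(t(1−t))` on `(0,1)`, the cumulative
length is `Λ(s) = ∫₀^s √(N/(r(1−r))) dr = 2√N·arcsin √s`, the geodesic schedule
generator is `φ*(t) = Λ⁻¹(Λ(1)·t) = sin²(π t/2)` (characterised by
`φ*(t) ∈ [0,1]` and `Λ(φ*(t)) = Λ(1)·t`), and the optimal schedule with `T ≥ 1`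
steps satisfies `α_{t_i*} = cos²((i/T)·(π/2))` for `t_i* = φ*(i/T)`, `0 ≤ i ≤ T`:
the cosine schedule. -/
theorem stmt13 (N T : ℕ) (hN : 1 ≤ N) (hT : 1 ≤ T)
    (L : ℝ → ℝ)
    (hL : ∀ s, L s = ∫ r in (0:ℝ)..s, Real.sqrt ((N : ℝ) / (r * (1 - r)))) :
    (∀ t ∈ Ioo (0:ℝ) 1,
      (N : ℝ) * (deriv (fun u : ℝ => 1 - u) t) ^ 2 / ((1 - t) * (1 - (1 - t)))
        = (N : ℝ) / (t * (1 - t))) ∧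
    (∀ s ∈ Icc (0:ℝ) 1, L s = 2 * Real.sqrt (N : ℝ) * Real.arcsin (Real.sqrt s)) ∧
    (∀ t ∈ Icc (0:ℝ) 1,
      Real.sin (π * t / 2) ^ 2 ∈ Icc (0:ℝ) 1 ∧
      L (Real.sin (π * t / 2) ^ 2) = L 1 * t) ∧
    (∀ i : ℕ, i ≤ T →
      1 - Real.sin (π * ((i : ℝ) / T) / 2) ^ 2
        = Real.cos (((i : ℝ) / T) * (π / 2)) ^ 2) :=
  stmt13_general N T L hL
end
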